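/- With N = 2^t and ω = e^{πi/N}, for any nonzero binary vector v of length n, CP_N(2^{wt(v)}, v) = ∏_{0 ≠ u ≼ v} RP_N(2·(−1)^{wt(u)−1} mod 2N, u). -/
import Mathlib


open Finset

noncomputable section

variable {n : ℕ}

/-- Hamming weight. -/
def wt (v : Fin n → ZMod 2) : ℕ := (univ.filter (fun i => v i = 1)).card

/-- `p_v(e) = ∏_{i ∈ supp(v)} e[i]` as an integer in {0,1}. -/
def pFun (v e : Fin n → ZMod 2) : ℤ := ∏ i ∈ univ.filter (fun i => v i = 1), ((e i).val : ℤ)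

/-- `s_v(e) = ⊕_{i ∈ supp(v)} e[i]` as an integer in {0,1}. -/
def sFun (v e : Fin n → ZMod 2) : ℤ :=
  ((∑ i ∈ univ.filter (fun i => v i = 1), e i : ZMod 2)).val

/-- indicator -/
def ind (T : Finset (Fin n)) : Fin n → ZMod 2 := fun i => if i ∈ T then 1 else 0

lemma supp_ind (T : Finset (Fin n)) : univ.filter (fun i => ind T i = 1) = T := by
  ext i; simp [ind]

lemma ind_supp (u : Fin n → ZMod 2) : ind (univ.filter (fun i => u i = 1)) = u := by
  funext i
  have h : ∀ a : ZMod 2, a = 0 ∨ a = 1 := by decide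
  simp only [ind, mem_filter, mem_univ, true_and]
  rcases h (u i) with h' | h' <;> simp [h']

lemma two_parity (T : Finset (Fin n)) (e : Fin n → ZMod 2) :
    (2:ℤ) * ((∑ i ∈ T, e i).val : ℤ) = 1 - ∏ i ∈ T, (1 - 2 * ((e i).val : ℤ)) := by
  induction T using Finset.cons_induction with
  | empty => simp
  | cons i T hi ih =>
    rw [Finset.sum_cons, Finset.prod_cons]
    have h : ∀ a s : ZMod 2, (2:ℤ) * (((a+s).val : ℕ) : ℤ)
        = 1 - (1 - 2*((a.val:ℕ):ℤ)) * (1 - 2*((s.val:ℕ):ℤ)) := by decide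
    rw [h]
    have h2 : (1 - 2*(((∑ i ∈ T, e i).val:ℕ):ℤ)) = ∏ i ∈ T, (1 - 2*(((e i).val:ℕ):ℤ)) := by
      linarith
    rw [h2]

lemma sum_powerset_prod (S : Finset (Fin n)) (c : Fin n → ℤ) :
    ∑ T ∈ S.powerset, ∏ i ∈ T, c i = ∏ i ∈ S, (c i + 1) := by
  rw [Finset.prod_add]; simp

lemma key (v e : Fin n → ZMod 2) (hv : v ≠ 0) :
    (2:ℤ)^(wt v) * pFun v e =
      ∑ u ∈ univ.filter (fun u : Fin n → ZMod 2 => u ≠ 0 ∧ ∀ i, u i = 1 → v i = 1),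
        (2 * (-1) ^ (wt u - 1)) * sFun u e := by
  classical
  set S : Finset (Fin n) := univ.filter (fun i => v i = 1) with hS
  -- reindex over subsets
  have hre : ∑ u ∈ univ.filter (fun u : Fin n → ZMod 2 => u ≠ 0 ∧ ∀ i, u i = 1 → v i = 1),
        (2 * (-1) ^ (wt u - 1)) * sFun u e
      = ∑ T ∈ S.powerset.filter (fun T => T ≠ ∅),
        (2 * (-1) ^ (T.card - 1)) * ((∑ i ∈ T, e i).val : ℤ) := by
    apply Finset.sum_nbij' (fun u => univ.filter (fun i => u i = 1)) ind
    · intro u hu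
      simp only [mem_filter, mem_univ, true_and] at hu
      simp only [mem_filter, mem_powerset]
      constructor
      · intro i hi; simp only [mem_filter, mem_univ, true_and] at hi ⊢
        simp only [hS, mem_filter, mem_univ, true_and]
        exact hu.2 i hi
      · intro h
        apply hu.1
        funext i
        have h2 : ∀ a : ZMod 2, a = 0 ∨ a = 1 := by decide
        rcases h2 (u i) with h' | h'
        · simpa using h'
        · exfalso
          have : i ∈ (∅ : Finset (Fin n)) := by
            rw [← h]; simp [h']
          simp at this
    · intro T hT
      simp only [mem_filter, mem_powerset] at hT
      simp only [mem_filter, mem_univ, true_and]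
      constructor
      · intro h0
        obtain ⟨i, hi⟩ := Finset.nonempty_iff_ne_empty.2 hT.2
        have : ind T i = 1 := by simp [ind, hi]
        rw [h0] at this
        simp at this
      · intro i hi
        have hiT : i ∈ T := by
          by_contra hc
          simp [ind, hc] at hi
        have := hT.1 hiT
        simpa [hS] using this
    · intro u hu; exact ind_supp u
    · intro T hT; exact supp_ind T
    · intro u hu
      rfl
  rw [hre]
  -- drop the ∅ exclusion: term at ∅ has (1 - P) = 0 ... rewrite term form first
  have hterm : ∀ T ∈ S.powerset, (2 * (-1:ℤ) ^ (T.card - 1)) * ((∑ i ∈ T, e i).val : ℤ)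
      = -((-1)^T.card) * (1 - ∏ i ∈ T, (1 - 2 * ((e i).val : ℤ))) := by
    intro T _
    rcases Finset.eq_empty_or_nonempty T with rfl | hT
    · simp
    · have hc : T.card ≠ 0 := by simpa [Finset.card_eq_zero] using Finset.nonempty_iff_ne_empty.1 hT
      have hpow : ((-1:ℤ)) ^ (T.card - 1) = -((-1)^T.card) := by
        obtain ⟨k, hk⟩ := Nat.exists_eq_succ_of_ne_zero hc
        rw [hk]; simp [pow_succ]
      rw [hpow, ← two_parity]
      ring
  have hempty : S.powerset.filter (fun T => T ≠ ∅) = S.powerset.erase ∅ := by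
    ext T; simp [Finset.mem_erase, and_comm]
  have hsum : ∑ T ∈ S.powerset.filter (fun T => T ≠ ∅),
        (2 * (-1:ℤ) ^ (T.card - 1)) * ((∑ i ∈ T, e i).val : ℤ)
      = ∑ T ∈ S.powerset,
        -((-1:ℤ)^T.card) * (1 - ∏ i ∈ T, (1 - 2 * ((e i).val : ℤ))) := by
    rw [hempty]
    rw [Finset.sum_erase_eq_sub (by simp)]
    rw [Finset.sum_congr rfl hterm]
    simp
  rw [hsum]
  have hSne : S.Nonempty := by
    rw [Finset.nonempty_iff_ne_empty]
    intro h
    apply hv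
    funext i
    have h2 : ∀ a : ZMod 2, a = 0 ∨ a = 1 := by decide
    rcases h2 (v i) with h' | h'
    · simpa using h'
    · exfalso
      have : i ∈ (∅ : Finset (Fin n)) := by rw [← h]; simp [hS, h']
      simp at this
  have e1 : ∑ T ∈ S.powerset, ((-1:ℤ)^T.card) = 0 := by
    have : ∀ T : Finset (Fin n), ((-1:ℤ))^T.card = ∏ i ∈ T, (-1:ℤ) := by
      intro T; rw [Finset.prod_const]
    rw [Finset.sum_congr rfl (fun T _ => this T), sum_powerset_prod]
    simp
    exact Finset.nonempty_iff_ne_empty.1 hSne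
  have e2 : ∑ T ∈ S.powerset, ((-1:ℤ)^T.card) * ∏ i ∈ T, (1 - 2 * ((e i).val : ℤ))
      = (2:ℤ)^(S.card) * ∏ i ∈ S, ((e i).val : ℤ) := by
    have : ∀ T ∈ S.powerset, ((-1:ℤ)^T.card) * ∏ i ∈ T, (1 - 2 * ((e i).val : ℤ))
        = ∏ i ∈ T, (-(1 - 2 * ((e i).val : ℤ))) := by
      intro T _
      rw [← Finset.prod_const (-1:ℤ), ← Finset.prod_mul_distrib]
      simp [neg_one_mul]
    rw [Finset.sum_congr rfl this, sum_powerset_prod]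
    have hfac : ∀ i ∈ S, (-(1 - 2 * ((e i).val:ℤ)) + 1) = 2 * ((e i).val:ℤ) := by
      intro i _; ring
    rw [Finset.prod_congr rfl hfac, Finset.prod_mul_distrib, Finset.prod_const]
  have expand : ∑ T ∈ S.powerset,
        -((-1:ℤ)^T.card) * (1 - ∏ i ∈ T, (1 - 2 * ((e i).val : ℤ)))
      = -(∑ T ∈ S.powerset, ((-1:ℤ)^T.card))
        + ∑ T ∈ S.powerset, ((-1:ℤ)^T.card) * ∏ i ∈ T, (1 - 2 * ((e i).val : ℤ)) := by
    rw [← Finset.sum_neg_distrib, ← Finset.sum_add_distrib]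
    apply Finset.sum_congr rfl
    intro T _
    ring
  rw [expand, e1, e2]
  simp [wt, pFun, hS]

lemma zpow_sum' {α : Type*} {a : ℂ} (ha : a ≠ 0) (s : Finset α) (f : α → ℤ) :
    a ^ (∑ i ∈ s, f i) = ∏ i ∈ s, a ^ f i := by
  induction s using Finset.cons_induction with
  | empty => simp
  | cons i s hi ih => rw [Finset.sum_cons, Finset.prod_cons, zpow_add₀ ha, ih]


/-- The diagonal operator `CP_N(q,v)`, represented by its phase function
`e ↦ ω^{q·p_v(e)}` on computational basis states, where `ω = e^{πi/2^t}`. -/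
def CP (t : ℕ) (q : ℤ) (v : Fin n → ZMod 2) : (Fin n → ZMod 2) → ℂ :=
  fun e => Complex.exp (Real.pi * Complex.I / (2 ^ t : ℕ)) ^ (q * pFun v e)

/-- The diagonal operator `RP_N(q,v)`, represented by its phase function
`e ↦ ω^{q·s_v(e)}`. -/
def RP (t : ℕ) (q : ℤ) (v : Fin n → ZMod 2) : (Fin n → ZMod 2) → ℂ :=
  fun e => Complex.exp (Real.pi * Complex.I / (2 ^ t : ℕ)) ^ (q * sFun v e)

/-- Duality: `CP_N(2^{wt(v)},v) = ∏_{0 ≠ u ≼ v} RP_N(2·(−1)^{wt(u)−1}, u)` for `N = 2^t`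
and nonzero `v`, products of diagonal operators being pointwise products of phases. -/
theorem CP_eq_prod_RP (t : ℕ) (ht : 1 ≤ t) (v : Fin n → ZMod 2) (hv : v ≠ 0) :
    CP t (2 ^ wt v) v =
      ∏ u ∈ univ.filter (fun u : Fin n → ZMod 2 => u ≠ 0 ∧ ∀ i, u i = 1 → v i = 1),
        RP t (2 * (-1) ^ (wt u - 1)) u := by
  funext e
  rw [Finset.prod_apply]
  simp only [CP, RP]
  rw [← zpow_sum' (Complex.exp_ne_zero _)]
  congr 1
  exact_mod_cast key v e hv
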